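/- arXiv:1810.11122 — 4 statements merged into one kernel-verified Lean document; each statement's English description precedes it below -/
import Mathlib

section
/- Let c = \sum_{i=1}^m c_i and d = \sum_{i=1}^m d_i with 0 \le c_i \le d_i and 1 \le d_i for all i. Suppose |c/d - K| > \delta for some 0 \le \delta, K \le 1. Then there exists j \in \{1,...,m\} such that d_j \ge (\delta/(2m)) d and |c_j/d_j - K| \ge \delta/2. -/
/-!
Write `Σ c - K Σ d = Σ dᵢ (cᵢ/dᵢ - K)`, where every deviation `|cᵢ/dᵢ - K|` is at most `1`.
The indices with deviation below `δ/2` contribute less than `(δ/2) Σ d`, so those with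
deviation at least `δ/2` carry total weight more than `(δ/2) Σ d`; by pigeonhole one of these
at most `m` indices has weight at least `(δ/(2m)) Σ d`.
-/

open Finset

lemma abs_div_sub_le_one {a b K : ℝ} (ha : 0 ≤ a) (hab : a ≤ b) (hb : 0 < b)
    (hK0 : 0 ≤ K) (hK1 : K ≤ 1) : |a / b - K| ≤ 1 := by
  have h0 : 0 ≤ a / b := div_nonneg ha hb.le
  have h1 : a / b ≤ 1 := (div_le_one hb).mpr hab
  rw [abs_le]
  constructor <;> linarith

section

variable {ι : Type*}

lemma exists_mem_div_lt_of_lt_sum {s : Finset ι} {w : ι → ℝ} {a : ℝ} {n : ℕ}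
    (ha : 0 ≤ a) (hs : #s ≤ n) (h : a < ∑ i ∈ s, w i) : ∃ j ∈ s, a / n < w j := by
  refine exists_lt_of_sum_lt (lt_of_le_of_lt ?_ h)
  rw [sum_const, nsmul_eq_mul]
  rcases (#s).eq_zero_or_pos with hs0 | hs0
  · simpa [hs0] using ha
  · have hn : (0 : ℝ) < n := by exact_mod_cast hs0.trans_le hs
    calc (#s : ℝ) * (a / n) ≤ n * (a / n) := by gcongr
      _ = a := mul_div_cancel₀ a hn.ne'

variable [Fintype ι]

lemma abs_sum_mul_le_sum_filter_add {w e : ι → ℝ} {ε : ℝ} (hε : 0 ≤ ε) (hw : ∀ i, 0 ≤ w i)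
    (he : ∀ i, |e i| ≤ 1) :
    |∑ i, w i * e i| ≤ ∑ i with ε ≤ |e i|, w i + ε * ∑ i, w i := by
  have hlarge : ∑ i with ε ≤ |e i|, w i * |e i| ≤ ∑ i with ε ≤ |e i|, w i :=
    sum_le_sum fun i _ => mul_le_of_le_one_right (hw i) (he i)
  have hsmall : ∑ i with ¬ε ≤ |e i|, w i * |e i| ≤ ε * ∑ i, w i :=
    calc ∑ i with ¬ε ≤ |e i|, w i * |e i| ≤ ∑ i with ¬ε ≤ |e i|, ε * w i :=
          sum_le_sum fun i hi => by
            rw [mul_comm]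
            exact mul_le_mul_of_nonneg_right (not_le.mp (mem_filter.mp hi).2).le (hw i)
      _ ≤ ∑ i, ε * w i := sum_le_sum_of_subset_of_nonneg (filter_subset _ _)
          fun i _ _ => mul_nonneg hε (hw i)
      _ = ε * ∑ i, w i := (mul_sum _ _ _).symm
  calc |∑ i, w i * e i| ≤ ∑ i, w i * |e i| :=
        (abs_sum_le_sum_abs _ _).trans_eq (sum_congr rfl fun i _ => by
          rw [abs_mul, abs_of_nonneg (hw i)])
    _ = ∑ i with ε ≤ |e i|, w i * |e i| + ∑ i with ¬ε ≤ |e i|, w i * |e i| :=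
        (sum_filter_add_sum_filter_not _ _ _).symm
    _ ≤ _ := add_le_add hlarge hsmall

end

theorem stmt0_general (m : ℕ) (hm : 0 < m) (c d : Fin m → ℝ)
    (hc0 : ∀ i, 0 ≤ c i) (hcd : ∀ i, c i ≤ d i) (hd1 : ∀ i, 1 ≤ d i)
    (K δ : ℝ) (hδ0 : 0 ≤ δ) (hK0 : 0 ≤ K) (hK1 : K ≤ 1)
    (hdev : |(∑ i, c i) / (∑ i, d i) - K| > δ) :
    ∃ j : Fin m, (δ / (2 * m)) * (∑ i, d i) ≤ d j ∧ δ / 2 ≤ |c j / d j - K| := by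
  have hd : ∀ i, 0 < d i := fun i => one_pos.trans_le (hd1 i)
  have hD : 0 < ∑ i, d i := sum_pos (fun i _ => hd i) ⟨⟨0, hm⟩, mem_univ _⟩
  have hweighted : (∑ i, c i) / (∑ i, d i) - K
      = (∑ i, d i * (c i / d i - K)) / ∑ i, d i := by
    rw [div_sub' hD.ne', sum_mul, ← sum_sub_distrib]
    congr 1
    exact sum_congr rfl fun i _ => by field_simp [(hd i).ne']
  rw [hweighted, abs_div, abs_of_pos hD, gt_iff_lt, lt_div_iff₀ hD] at hdev
  have hsplit := abs_sum_mul_le_sum_filter_add (by positivity : 0 ≤ δ / 2) (fun i => (hd i).le)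
    fun i => abs_div_sub_le_one (hc0 i) (hcd i) (hd i) hK0 hK1
  have hlarge : δ / 2 * ∑ i, d i < ∑ i with δ / 2 ≤ |c i / d i - K|, d i := by linarith
  obtain ⟨j, hj, hdj⟩ := exists_mem_div_lt_of_lt_sum (by positivity) (card_le_univ _) hlarge
  rw [Fintype.card_fin] at hdj
  exact ⟨j, le_of_eq_of_le (by ring) hdj.le, (mem_filter.mp hj).2⟩

theorem stmt0 (m : ℕ) (hm : 0 < m) (c d : Fin m → ℝ)
    (hc0 : ∀ i, 0 ≤ c i) (hcd : ∀ i, c i ≤ d i) (hd1 : ∀ i, 1 ≤ d i)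
    (K δ : ℝ) (hδ0 : 0 ≤ δ) (hδ1 : δ ≤ 1) (hK0 : 0 ≤ K) (hK1 : K ≤ 1)
    (hdev : |(∑ i, c i) / (∑ i, d i) - K| > δ) :
    ∃ j : Fin m, (δ / (2 * m)) * (∑ i, d i) ≤ d j ∧ δ / 2 ≤ |c j / d j - K| :=
  stmt0_general m hm c d hc0 hcd hd1 K δ hδ0 hK0 hK1 hdev
end

section
/- Let \vartheta be an expanding primitive random substitution. There exist constants C, K > 0 such that for all letters a and all sufficiently large n, P[|\vartheta^n(a)| < K n] \le e^{-C n}. In particular, |\vartheta^n(a)| \to \infty almost surely for all a \in \mathcal{A}. -/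
/-!
Chernoff bound for the Laplace functional `E[2^{-|w|}]`. Since the letters of a word are
substituted independently, `E[2^{-|ϑ^m(u)|}]` is the product of the `E[2^{-|ϑ^m(c)|}]` over the
letters `c` of `u`. Primitivity and expansion give an `m` such that every `ϑ^m(c)` has length at
least `2` with positive probability, and words never shrink; so `E[2^{-|ϑ^m(c)|}] ≤ r/2` for some
`r < 1`, whence `E[2^{-|ϑ^m(u)|}] ≤ r 2^{-|u|}` for nonempty `u` and
`E[2^{-|ϑ^n(a)|}] ≤ r^{⌊n/m⌋}`. Markov's inequality bounds `P[|ϑ^n(a)| < K n]` by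
`2^{K n} r^{⌊n/m⌋}`, which decays exponentially once `K` is small, and Borel–Cantelli gives
`|ϑ^n(a)| → ∞` almost surely.
-/

namespace RS

variable {A : Type*} [Fintype A] [DecidableEq A]

/-- One step of the random substitution applied to a (deterministic) word:
each letter is replaced independently and the results are concatenated. -/
noncomputable def stepPMF (ϑ : A → PMF (List A)) : List A → PMF (List A)
  | [] => PMF.pure []
  | a :: u => (ϑ a).bind fun w => (stepPMF ϑ u).map (w ++ ·)

/-- The Markov chain `ϑ^n(a)` started at the one-letter word `[a]`. -/
noncomputable def iterPMF (ϑ : A → PMF (List A)) : ℕ → A → PMF (List A)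
  | 0, a => PMF.pure [a]
  | n + 1, a => (iterPMF ϑ n a).bind (stepPMF ϑ)

/-- The mean substitution matrix `(M_ϑ)_{a b} = E[|ϑ(b)|_a]`. -/
noncomputable def meanMatrix (ϑ : A → PMF (List A)) : Matrix A A ℝ :=
  Matrix.of fun a b => ∑' w : List A, ((ϑ b) w).toReal * (w.count a)

/-- A random substitution is primitive if its mean matrix is primitive. -/
def Primitive (ϑ : A → PMF (List A)) : Prop :=
  ∃ k : ℕ, ∀ a b : A, 0 < ((meanMatrix ϑ) ^ k) a b

/-- A random substitution is expanding if `P[|ϑ(a)| > 1] > 0` for some letter. -/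
def Expanding (ϑ : A → PMF (List A)) : Prop :=
  ∃ a : A, 0 < (ϑ a).toOuterMeasure {w | 1 < w.length}

/-- A word is legal if it occurs as a subword of some realisation of some `ϑ^n(a)`. -/
def Legal (ϑ : A → PMF (List A)) (v : List A) : Prop :=
  ∃ (n : ℕ) (a : A) (w : List A), w ∈ (iterPMF ϑ n a).support ∧ v <:+: w

/-- The number of occurrences `|w|_v` of the word `v` as a subword of `w`. -/
def subCount (v w : List A) : ℕ :=
  (List.range w.length).countP fun i => (w.drop i).take v.length == v

end RS

open ENNReal Filter MeasureTheory

namespace PMF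

variable {α β : Type*}

/-- `∫⁻ a, f a ∂p.toMeasure`, without putting a measurable structure on `α`. -/
noncomputable def expect (p : PMF α) (f : α → ℝ≥0∞) : ℝ≥0∞ := ∑' a, p a * f a

theorem expect_pure (a : α) (f : α → ℝ≥0∞) : (PMF.pure a).expect f = f a := by
  rw [expect, tsum_eq_single a fun b hb => by simp [PMF.pure_apply, hb]]
  simp

theorem expect_bind (p : PMF α) (q : α → PMF β) (f : β → ℝ≥0∞) :
    (p.bind q).expect f = p.expect fun a => (q a).expect f := by
  simp only [expect, PMF.bind_apply, ← ENNReal.tsum_mul_right, ← ENNReal.tsum_mul_left,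
    mul_assoc]
  exact ENNReal.tsum_comm

theorem expect_map (p : PMF α) (g : α → β) (f : β → ℝ≥0∞) :
    (p.map g).expect f = p.expect (f ∘ g) := by
  rw [PMF.map, expect_bind]
  simp only [Function.comp_apply, expect_pure]
  rfl

theorem expect_mono {p : PMF α} {f g : α → ℝ≥0∞} (h : ∀ a ∈ p.support, f a ≤ g a) :
    p.expect f ≤ p.expect g := by
  refine ENNReal.tsum_le_tsum fun a => ?_
  by_cases ha : a ∈ p.support
  · exact mul_le_mul_right (h a ha) _
  · simp [(PMF.apply_eq_zero_iff p a).2 ha]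

theorem expect_const (p : PMF α) (c : ℝ≥0∞) : p.expect (fun _ => c) = c := by
  rw [expect, ENNReal.tsum_mul_right, p.tsum_coe, one_mul]

theorem expect_const_mul (p : PMF α) (c : ℝ≥0∞) (f : α → ℝ≥0∞) :
    p.expect (fun a => c * f a) = c * p.expect f := by
  simp only [expect, mul_left_comm _ c, ENNReal.tsum_mul_left]

theorem expect_lt_const {p : PMF α} {f : α → ℝ≥0∞} {c : ℝ≥0∞} (hc : c ≠ ⊤)
    (h : ∀ a ∈ p.support, f a ≤ c) {a : α} (ha : a ∈ p.support) (hlt : f a < c) :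
    p.expect f < c := by
  have hterm : ∀ b, p b * f b ≤ p b * c := fun b => by
    by_cases hb : b ∈ p.support
    · exact mul_le_mul_right (h b hb) _
    · simp [(PMF.apply_eq_zero_iff p b).2 hb]
  have hsum : ∑' b, p b * c = c := expect_const p c
  rw [← hsum, expect]
  refine ENNReal.tsum_lt_tsum ?_ hterm
    (ENNReal.mul_lt_mul_right ((p.mem_support_iff a).1 ha) (p.apply_ne_top a) hlt)
  exact ne_top_of_le_ne_top hc (hsum ▸ ENNReal.tsum_le_tsum hterm)

theorem toOuterMeasure_le_expect (p : PMF α) {s : Set α} {f : α → ℝ≥0∞}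
    (h : ∀ a ∈ s, 1 ≤ f a) : p.toOuterMeasure s ≤ p.expect f := by
  rw [toOuterMeasure_apply]
  refine ENNReal.tsum_le_tsum fun a => ?_
  by_cases ha : a ∈ s
  · rw [Set.indicator_of_mem ha]
    exact le_mul_of_one_le_right' (h a ha)
  · rw [Set.indicator_of_notMem ha]
    exact zero_le

end PMF

theorem exists_rpow_two_mul_pow_div_le_exp {m : ℕ} (hm : 0 < m) {q : ℝ} (hq0 : 0 < q)
    (hq1 : q < 1) : ∃ C K : ℝ, 0 < C ∧ 0 < K ∧
      ∀ n : ℕ, 4 * m ≤ n → (2 : ℝ) ^ (K * n) * q ^ (n / m) ≤ Real.exp (-C * n) := by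
  set c := -Real.log q with hc_def
  have hc : 0 < c := neg_pos.2 (Real.log_neg hq0 hq1)
  have hlog2 : 0 < Real.log 2 := Real.log_pos one_lt_two
  have hmR : (0 : ℝ) < m := Nat.cast_pos.2 hm
  refine ⟨c / (4 * m), c / (2 * m * Real.log 2), by positivity, by positivity, fun n hn => ?_⟩
  have hq : q = Real.exp (-c) := by rw [hc_def, neg_neg, Real.exp_log hq0]
  have hj : 3 * (n : ℝ) ≤ 4 * (m * (n / m : ℕ)) := by
    have hdiv : n < m * (n / m) + m := by
      have := Nat.div_add_mod n m
      have := Nat.mod_lt n hm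
      omega
    have hdiv' : (n : ℝ) + 1 ≤ m * (n / m : ℕ) + m := by exact_mod_cast hdiv
    have hn' : (4 * m : ℝ) ≤ n := by exact_mod_cast hn
    linarith
  rw [Real.rpow_def_of_pos two_pos, hq, ← Real.exp_nat_mul, ← Real.exp_add, Real.exp_le_exp]
  have key : Real.log 2 * (c / (2 * m * Real.log 2) * n) + (n / m : ℕ) * -c + c / (4 * m) * n
      = -(c * (4 * (m * (n / m : ℕ)) - 3 * n) / (4 * m)) := by
    field_simp
    ring
  have hnonneg : 0 ≤ c * (4 * (m * (n / m : ℕ)) - 3 * n) / (4 * m) :=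
    div_nonneg (mul_nonneg hc.le (by linarith)) (by positivity)
  linarith

theorem MeasureTheory.ae_tendsto_atTop_of_measure_lt_le_exp {Ω : Type*} [MeasurableSpace Ω]
    {μ : Measure Ω} {f : ℕ → Ω → ℕ} {C K : ℝ} (hC : 0 < C) (hK : 0 < K)
    (h : ∀ᶠ n in atTop,
      μ {ω | (f n ω : ℝ) < K * n} ≤ ENNReal.ofReal (Real.exp (-C * n))) :
    ∀ᵐ ω ∂μ, Tendsto (fun n => f n ω) atTop atTop := by
  obtain ⟨N, hN⟩ := eventually_atTop.1 h
  set s : ℕ → Set Ω := fun n => {ω | N ≤ n ∧ (f n ω : ℝ) < K * n}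
  have hs : ∀ n, μ (s n) ≤ ENNReal.ofReal (Real.exp (n * -C)) := fun n => by
    by_cases hn : N ≤ n
    · rw [mul_comm]
      exact (measure_mono fun ω hω => hω.2).trans (hN n hn)
    · simp [s, hn]
  have hsum : ∑' n, μ (s n) ≠ ⊤ :=
    ne_top_of_le_ne_top (Real.summable_exp_nat_mul_iff.2 (neg_neg_of_pos hC)).tsum_ofReal_ne_top
      (ENNReal.tsum_le_tsum hs)
  filter_upwards [ae_eventually_notMem hsum] with ω hω
  refine tendsto_natCast_atTop_iff.1 (tendsto_atTop_mono' atTop ?_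
    (tendsto_natCast_atTop_atTop.const_mul_atTop hK))
  filter_upwards [hω, eventually_ge_atTop N] with n hn hNn
  exact not_lt.1 fun hlt => hn ⟨hNn, hlt⟩

namespace RS

variable {A : Type*} (ϑ : A → PMF (List A))

/-- `stepIter ϑ n u` is the law of `ϑ^n(u)`. -/
noncomputable def stepIter : ℕ → List A → PMF (List A)
  | 0, u => PMF.pure u
  | n + 1, u => (stepIter n u).bind (stepPMF ϑ)

theorem iterPMF_eq_stepIter (n : ℕ) (a : A) : iterPMF ϑ n a = stepIter ϑ n [a] := by
  induction n with
  | zero => rfl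
  | succ n ih => simp only [iterPMF, stepIter, ih]

theorem stepIter_add (n m : ℕ) (u : List A) :
    stepIter ϑ (n + m) u = (stepIter ϑ n u).bind (stepIter ϑ m) := by
  induction m with
  | zero => exact (PMF.bind_pure _).symm
  | succ m ih =>
    show (stepIter ϑ (n + m) u).bind (stepPMF ϑ) = _
    rw [ih, PMF.bind_bind]
    rfl

theorem stepIter_nil (n : ℕ) : stepIter ϑ n ([] : List A) = PMF.pure [] := by
  induction n with
  | zero => rfl
  | succ n ih =>
    show (stepIter ϑ n []).bind (stepPMF ϑ) = _
    rw [ih, PMF.pure_bind]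
    rfl

theorem stepPMF_append (u v : List A) :
    stepPMF ϑ (u ++ v) = (stepPMF ϑ u).bind fun w => (stepPMF ϑ v).map (w ++ ·) := by
  induction u with
  | nil =>
    show stepPMF ϑ v = (PMF.pure []).bind fun w => (stepPMF ϑ v).map (w ++ ·)
    rw [PMF.pure_bind]
    exact (PMF.map_id _).symm
  | cons a u ih =>
    show (ϑ a).bind (fun w => (stepPMF ϑ (u ++ v)).map (w ++ ·)) =
      ((ϑ a).bind fun w => (stepPMF ϑ u).map (w ++ ·)).bind fun w => (stepPMF ϑ v).map (w ++ ·)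
    simp only [ih, PMF.bind_bind, PMF.bind_map, PMF.map_bind, PMF.map_comp, Function.comp_def,
      List.append_assoc]

theorem stepIter_append (n : ℕ) (u v : List A) :
    stepIter ϑ n (u ++ v) = (stepIter ϑ n u).bind fun w => (stepIter ϑ n v).map (w ++ ·) := by
  induction n with
  | zero =>
    show PMF.pure (u ++ v) = (PMF.pure u).bind fun w => (PMF.pure v).map (w ++ ·)
    rw [PMF.pure_bind, PMF.pure_map]
  | succ n ih =>
    show (stepIter ϑ n (u ++ v)).bind (stepPMF ϑ) =
      ((stepIter ϑ n u).bind (stepPMF ϑ)).bind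
        fun w => ((stepIter ϑ n v).bind (stepPMF ϑ)).map (w ++ ·)
    simp only [ih, PMF.bind_bind, PMF.bind_map, PMF.map_bind, Function.comp_def,
      stepPMF_append]
    congr 1
    funext w
    rw [PMF.bind_comm (stepIter ϑ n v) (stepPMF ϑ w)]

theorem mem_support_stepIter_succ {n : ℕ} {u v w : List A} (hv : v ∈ (stepIter ϑ n u).support)
    (hw : w ∈ (stepPMF ϑ v).support) : w ∈ (stepIter ϑ (n + 1) u).support :=
  (PMF.mem_support_bind_iff _ _ _).2 ⟨v, hv, hw⟩

theorem flatten_map_mem_support_stepPMF (u : List A) (g : A → List A)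
    (hg : ∀ a ∈ u, g a ∈ (ϑ a).support) : (u.map g).flatten ∈ (stepPMF ϑ u).support := by
  induction u with
  | nil => simp [stepPMF]
  | cons a u ih =>
    simp only [stepPMF, PMF.support_bind, PMF.support_map, Set.mem_iUnion]
    exact ⟨g a, hg a (by simp), _, ih fun b hb => hg b (by simp [hb]), rfl⟩

theorem exists_infix_mem_support_stepPMF {w v : List A} {c : A} (hc : c ∈ w)
    (hv : v ∈ (ϑ c).support) : ∃ w' ∈ (stepPMF ϑ w).support, v <:+: w' := by
  classical
  obtain ⟨s, t, rfl⟩ := List.append_of_mem hc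
  let g : A → List A := fun a => if a = c then v else (ϑ a).support_nonempty.some
  have hg : ∀ a ∈ s ++ c :: t, g a ∈ (ϑ a).support := by
    intro a _
    by_cases h : a = c
    · subst h; simpa [g] using hv
    · simpa [g, h] using (ϑ a).support_nonempty.some_mem
  refine ⟨_, flatten_map_mem_support_stepPMF ϑ _ g hg, (s.map g).flatten, (t.map g).flatten,
    ?_⟩
  simp [g, List.flatten_append]

section NonErasing

variable {ϑ} (hne : ∀ a : A, [] ∉ (ϑ a).support)
include hne

theorem length_le_of_mem_support_stepPMF {u w : List A} (hw : w ∈ (stepPMF ϑ u).support) :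
    u.length ≤ w.length := by
  induction u generalizing w with
  | nil => simp
  | cons a u ih =>
    simp only [stepPMF, PMF.support_bind, PMF.support_map, Set.mem_iUnion] at hw
    obtain ⟨v, hv, w', hw', rfl⟩ := hw
    have : v ≠ [] := fun h => hne a (h ▸ hv)
    have := List.length_pos_iff.2 this
    have := ih hw'
    simp only [List.length_cons, List.length_append]
    omega

theorem length_le_of_mem_support_stepIter {n : ℕ} {u w : List A}
    (hw : w ∈ (stepIter ϑ n u).support) : u.length ≤ w.length := by
  induction n generalizing w with
  | zero =>
    obtain rfl : w = u := by simpa [stepIter] using hw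
    exact le_rfl
  | succ n ih =>
    obtain ⟨v, hv, hw⟩ := (PMF.mem_support_bind_iff _ _ _).1 hw
    exact (ih hv).trans (length_le_of_mem_support_stepPMF hne hw)

end NonErasing

section MeanMatrix

variable [DecidableEq A]

theorem meanMatrix_nonneg (a b : A) : 0 ≤ meanMatrix ϑ a b :=
  tsum_nonneg fun _ => mul_nonneg ENNReal.toReal_nonneg (Nat.cast_nonneg _)

theorem exists_mem_support_of_meanMatrix_pos {a b : A} (h : 0 < meanMatrix ϑ a b) :
    ∃ w ∈ (ϑ b).support, a ∈ w := by
  by_contra! hcon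
  refine h.ne' ((tsum_congr fun w => ?_).trans tsum_zero)
  by_cases hw : w ∈ (ϑ b).support
  · simp [List.count_eq_zero.2 (hcon w hw)]
  · simp [(PMF.apply_eq_zero_iff _ _).2 hw]

variable [Fintype A]

theorem meanMatrix_pow_nonneg (k : ℕ) (a b : A) : 0 ≤ (meanMatrix ϑ ^ k) a b := by
  induction k generalizing a b with
  | zero => by_cases h : a = b <;> simp [h]
  | succ k ih =>
    rw [pow_succ, Matrix.mul_apply]
    exact Finset.sum_nonneg fun c _ => mul_nonneg (ih a c) (meanMatrix_nonneg ϑ c b)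

theorem exists_mem_support_stepIter_of_meanMatrix_pow_pos {k : ℕ} {a b : A}
    (h : 0 < (meanMatrix ϑ ^ k) a b) : ∃ w ∈ (stepIter ϑ k [b]).support, a ∈ w := by
  induction k generalizing a with
  | zero =>
    obtain rfl : a = b := by by_contra hab; simp [hab] at h
    exact ⟨[a], by simp [stepIter], List.mem_singleton_self a⟩
  | succ k ih =>
    rw [pow_succ', Matrix.mul_apply, Finset.sum_pos_iff_of_nonneg fun c _ =>
      mul_nonneg (meanMatrix_nonneg ϑ a c) (meanMatrix_pow_nonneg ϑ k c b)] at h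
    obtain ⟨c, -, hc⟩ := h
    obtain ⟨w, hw, hcw⟩ :=
      ih (pos_of_mul_pos_right hc (meanMatrix_nonneg ϑ a c))
    obtain ⟨v, hv, hav⟩ :=
      exists_mem_support_of_meanMatrix_pos ϑ
        (pos_of_mul_pos_left hc (meanMatrix_pow_nonneg ϑ k c b))
    obtain ⟨w', hw', hvw'⟩ := exists_infix_mem_support_stepPMF ϑ hcw hv
    exact ⟨w', mem_support_stepIter_succ ϑ hw hw', hvw'.subset hav⟩

/-- A power of the mean matrix with positive entries lets every letter reach the expanding
letter, which then grows with positive probability in one more step. -/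
theorem exists_two_le_length_mem_support_stepIter (hprim : Primitive ϑ) (hexp : Expanding ϑ) :
    ∃ m, 0 < m ∧ ∀ c : A, ∃ w ∈ (stepIter ϑ m [c]).support, 2 ≤ w.length := by
  obtain ⟨k, hk⟩ := hprim
  obtain ⟨b, hb⟩ := hexp
  obtain ⟨v, hv, hv2⟩ : ∃ v ∈ (ϑ b).support, 1 < v.length := by
    by_contra! hcon
    refine hb.ne' ((PMF.toOuterMeasure_apply_eq_zero_iff _ _).2 ?_)
    exact Set.disjoint_left.2 fun v hv hv2 => (hcon v hv).not_gt hv2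
  refine ⟨k + 1, k.succ_pos, fun c => ?_⟩
  obtain ⟨w, hw, hbw⟩ := exists_mem_support_stepIter_of_meanMatrix_pow_pos ϑ (hk b c)
  obtain ⟨w', hw', hvw'⟩ := exists_infix_mem_support_stepPMF ϑ hbw hv
  exact ⟨w', mem_support_stepIter_succ ϑ hw hw', hv2.trans_le hvw'.length_le⟩

end MeanMatrix

section Laplace

noncomputable def halfPowLength (w : List A) : ℝ≥0∞ := 2⁻¹ ^ w.length

theorem halfPowLength_append (u v : List A) :
    halfPowLength (u ++ v) = halfPowLength u * halfPowLength v := by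
  simp only [halfPowLength, List.length_append, pow_add]

theorem halfPowLength_le_of_length_le {u v : List A} (h : u.length ≤ v.length) :
    halfPowLength v ≤ halfPowLength u :=
  pow_le_pow_of_le_one zero_le (ENNReal.inv_le_one.2 one_le_two) h

theorem halfPowLength_le_one (u : List A) : halfPowLength u ≤ 1 :=
  pow_le_one₀ zero_le (ENNReal.inv_le_one.2 one_le_two)

theorem expect_halfPowLength_bind_map_append (p q : PMF (List A)) :
    (p.bind fun u => q.map (u ++ ·)).expect halfPowLength =
      p.expect halfPowLength * q.expect halfPowLength := by
  simp only [PMF.expect_bind, PMF.expect_map, Function.comp_def, halfPowLength_append,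
    PMF.expect_const_mul]
  rw [mul_comm, ← PMF.expect_const_mul]
  simp only [mul_comm]

theorem expect_halfPowLength_lt_half {p : PMF (List A)} (hp : ∀ v ∈ p.support, 0 < v.length)
    {w : List A} (hw : w ∈ p.support) (hw2 : 2 ≤ w.length) :
    p.expect halfPowLength < 2⁻¹ := by
  have hinv : (2⁻¹ : ℝ≥0∞) < 1 := ENNReal.inv_lt_one.2 one_lt_two
  refine PMF.expect_lt_const (by simp) (fun v hv => ?_) hw ?_
  · exact pow_le_of_le_one zero_le hinv.le (hp v hv).ne'
  · calc halfPowLength w ≤ 2⁻¹ * 2⁻¹ :=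
          (pow_le_pow_of_le_one zero_le hinv.le hw2).trans_eq (sq _)
      _ < 1 * 2⁻¹ := ENNReal.mul_lt_mul_left (by simp) (by simp) hinv
      _ = 2⁻¹ := one_mul _

theorem toOuterMeasure_length_lt_le (p : PMF (List A)) (t : ℝ) :
    p.toOuterMeasure {w | (w.length : ℝ) < t} ≤
      ENNReal.ofReal (2 ^ t) * p.expect halfPowLength := by
  rw [← PMF.expect_const_mul]
  refine p.toOuterMeasure_le_expect fun w (hw : (w.length : ℝ) < t) => ?_
  have h2 : (2 : ℝ≥0∞) ^ w.length ≤ ENNReal.ofReal (2 ^ t) := by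
    rw [← ENNReal.ofReal_ofNat 2, ← ENNReal.ofReal_pow zero_le_two, ← Real.rpow_natCast]
    exact ENNReal.ofReal_le_ofReal (Real.rpow_le_rpow_of_exponent_le one_le_two hw.le)
  rwa [halfPowLength, ← ENNReal.inv_pow, ← div_eq_mul_inv,
    ENNReal.le_div_iff_mul_le (Or.inl (pow_ne_zero _ two_ne_zero)) (Or.inl (by simp)), one_mul]

theorem expect_halfPowLength_stepIter_le_pow {m : ℕ} {r : ℝ≥0∞}
    (hr : ∀ c, (stepIter ϑ m [c]).expect halfPowLength ≤ r * halfPowLength [c]) (u : List A) :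
    (stepIter ϑ m u).expect halfPowLength ≤ r ^ u.length * halfPowLength u := by
  induction u with
  | nil => simp [stepIter_nil, PMF.expect_pure]
  | cons c u ih =>
    rw [← List.singleton_append, stepIter_append, expect_halfPowLength_bind_map_append,
      halfPowLength_append, List.length_append, pow_add, List.length_singleton, pow_one]
    calc _ ≤ (r * halfPowLength [c]) * (r ^ u.length * halfPowLength u) := by gcongr; exact hr c
      _ = _ := by ring

variable {ϑ} (hne : ∀ a : A, [] ∉ (ϑ a).support)
include hne

theorem expect_halfPowLength_stepIter_le (n : ℕ) (u : List A) :
    (stepIter ϑ n u).expect halfPowLength ≤ halfPowLength u :=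
  (PMF.expect_mono fun _ hw =>
    halfPowLength_le_of_length_le (length_le_of_mem_support_stepIter hne hw)).trans
    (PMF.expect_const _ _).le

theorem expect_halfPowLength_stepIter_mul_le {m : ℕ} {r : ℝ≥0∞} (hr1 : r ≤ 1)
    (hr : ∀ c, (stepIter ϑ m [c]).expect halfPowLength ≤ r * halfPowLength [c]) (j : ℕ)
    {u : List A} (hu : u ≠ []) :
    (stepIter ϑ (m * j) u).expect halfPowLength ≤ r ^ j * halfPowLength u := by
  induction j with
  | zero => simp [stepIter, PMF.expect_pure]
  | succ j ih =>
    have hstep : ∀ v ∈ (stepIter ϑ (m * j) u).support,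
        (stepIter ϑ m v).expect halfPowLength ≤ r * halfPowLength v := by
      intro v hv
      have hv0 : v.length ≠ 0 :=
        ((List.length_pos_iff.2 hu).trans_le (length_le_of_mem_support_stepIter hne hv)).ne'
      calc _ ≤ r ^ v.length * halfPowLength v := expect_halfPowLength_stepIter_le_pow ϑ hr v
        _ ≤ r * halfPowLength v := by gcongr; exact pow_le_of_le_one zero_le hr1 hv0
    calc (stepIter ϑ (m * (j + 1)) u).expect halfPowLength
        = (stepIter ϑ (m * j) u).expect fun v => (stepIter ϑ m v).expect halfPowLength := by
          rw [mul_add_one, stepIter_add, PMF.expect_bind]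
      _ ≤ r * (stepIter ϑ (m * j) u).expect halfPowLength := by
          rw [← PMF.expect_const_mul]; exact PMF.expect_mono hstep
      _ ≤ r * (r ^ j * halfPowLength u) := by gcongr
      _ = r ^ (j + 1) * halfPowLength u := by ring

theorem expect_halfPowLength_iterPMF_le {m : ℕ} {r : ℝ≥0∞} (hr1 : r ≤ 1)
    (hr : ∀ c, (stepIter ϑ m [c]).expect halfPowLength ≤ r * halfPowLength [c])
    (n : ℕ) (a : A) :
    (iterPMF ϑ n a).expect halfPowLength ≤ r ^ (n / m) := by
  rw [iterPMF_eq_stepIter]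
  nth_rw 1 [← Nat.div_add_mod n m]
  rw [stepIter_add, PMF.expect_bind]
  calc _ ≤ (stepIter ϑ (m * (n / m)) [a]).expect halfPowLength :=
        PMF.expect_mono fun v _ => expect_halfPowLength_stepIter_le hne _ v
    _ ≤ r ^ (n / m) * halfPowLength [a] :=
        expect_halfPowLength_stepIter_mul_le hne hr1 hr _ (List.cons_ne_nil a [])
    _ ≤ r ^ (n / m) := mul_le_of_le_one_right zero_le (halfPowLength_le_one _)

end Laplace

section ExponentialBound

variable [DecidableEq A] [Fintype A] {ϑ} (hne : ∀ a : A, [] ∉ (ϑ a).support)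
include hne

theorem exists_expect_halfPowLength_stepIter_le (hprim : Primitive ϑ) (hexp : Expanding ϑ) :
    ∃ m, 0 < m ∧ ∃ r < 1,
      ∀ c, (stepIter ϑ m [c]).expect halfPowLength ≤ r * halfPowLength [c] := by
  obtain ⟨m, hm, hgrow⟩ := exists_two_le_length_mem_support_stepIter ϑ hprim hexp
  have hlt : ∀ c, (stepIter ϑ m [c]).expect halfPowLength < 2⁻¹ := fun c => by
    obtain ⟨w, hw, hw2⟩ := hgrow c
    exact expect_halfPowLength_lt_half (fun v hv => length_le_of_mem_support_stepIter hne hv) hw hw2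
  have : Nonempty A := ⟨hexp.choose⟩
  set ρ := Finset.univ.sup' Finset.univ_nonempty fun c => (stepIter ϑ m [c]).expect halfPowLength
  refine ⟨m, hm, 2 * ρ, ?_, fun c => ?_⟩
  · calc 2 * ρ < 2 * 2⁻¹ :=
          ENNReal.mul_lt_mul_right two_ne_zero (by simp)
            ((Finset.sup'_lt_iff _).2 fun c _ => hlt c)
      _ = 1 := ENNReal.mul_inv_cancel two_ne_zero (by simp)
  · calc _ ≤ ρ := Finset.le_sup' (fun c => (stepIter ϑ m [c]).expect halfPowLength)
          (Finset.mem_univ c)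
      _ = 2 * ρ * halfPowLength [c] := by
          rw [halfPowLength, List.length_singleton, pow_one, mul_comm 2, mul_assoc,
            ENNReal.mul_inv_cancel two_ne_zero (by simp), mul_one]

theorem exists_iterPMF_length_lt_le_exp (hprim : Primitive ϑ) (hexp : Expanding ϑ) :
    ∃ C K : ℝ, 0 < C ∧ 0 < K ∧ ∀ a : A, ∀ᶠ n : ℕ in atTop,
      (iterPMF ϑ n a).toOuterMeasure {w | (w.length : ℝ) < K * n} ≤
        ENNReal.ofReal (Real.exp (-C * n)) := by
  obtain ⟨m, hm, r, hr1, hr⟩ := exists_expect_halfPowLength_stepIter_le hne hprim hexp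
  obtain ⟨q, hq, hrq, hq1⟩ := ENNReal.lt_iff_exists_real_btwn.1 hr1
  obtain ⟨C, K, hC, hK, hbound⟩ := exists_rpow_two_mul_pow_div_le_exp hm
    (ENNReal.ofReal_pos.1 (hrq.trans_le' zero_le)) (ENNReal.ofReal_lt_one.1 hq1)
  refine ⟨C, K, hC, hK, fun a => eventually_atTop.2 ⟨4 * m, fun n hn => ?_⟩⟩
  calc _ ≤ ENNReal.ofReal (2 ^ (K * n)) * (iterPMF ϑ n a).expect halfPowLength :=
        toOuterMeasure_length_lt_le _ _
    _ ≤ ENNReal.ofReal (2 ^ (K * n)) * ENNReal.ofReal q ^ (n / m) := by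
        gcongr
        exact (expect_halfPowLength_iterPMF_le hne hr1.le hr n a).trans (by gcongr)
    _ = ENNReal.ofReal (2 ^ (K * n) * q ^ (n / m)) := by
        rw [ENNReal.ofReal_mul (by positivity), ENNReal.ofReal_pow hq]
    _ ≤ _ := ENNReal.ofReal_le_ofReal (hbound n hn)

end ExponentialBound

open Filter MeasureTheory in
theorem stmt12_general {A : Type*} [Fintype A] [DecidableEq A] (ϑ : A → PMF (List A))
    (hne : ∀ a : A, [] ∉ (ϑ a).support)
    (hprim : Primitive ϑ) (hexp : Expanding ϑ) :
    (∃ C K : ℝ, 0 < C ∧ 0 < K ∧ ∀ a : A, ∀ᶠ n : ℕ in Filter.atTop,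
      (iterPMF ϑ n a).toOuterMeasure {w | (w.length : ℝ) < K * n} ≤
        ENNReal.ofReal (Real.exp (-C * n))) ∧
    (∀ (Ω : Type) [MeasurableSpace Ω] (μ : Measure Ω), IsProbabilityMeasure μ →
      ∀ (a : A) (X : ℕ → Ω → List A),
        (∀ (n : ℕ) (s : Set (List A)), μ (X n ⁻¹' s) = (iterPMF ϑ n a).toOuterMeasure s) →
        ∀ᵐ ω ∂μ, Filter.Tendsto (fun n => (X n ω).length) Filter.atTop Filter.atTop) := by
  obtain ⟨C, K, hC, hK, hbound⟩ := exists_iterPMF_length_lt_le_exp hne hprim hexp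
  refine ⟨⟨C, K, hC, hK, hbound⟩, fun Ω _ μ _ a X hX => ?_⟩
  exact ae_tendsto_atTop_of_measure_lt_le_exp hC hK
    ((hbound a).mono fun n hn => (hX n _).trans_le hn)

open Filter MeasureTheory in
/-- for an expanding primitive random substitution there are `C, K > 0`
with `P[|ϑ^n(a)| < K n] ≤ e^{-C n}` for all letters `a` and all large `n`; in
particular `|ϑ^n(a)| → ∞` almost surely (for any realisation of the chain with the
correct marginal distributions). -/
theorem stmt12 {A : Type*} [Fintype A] [DecidableEq A] (ϑ : A → PMF (List A))
    (hfin : ∀ a : A, (ϑ a).support.Finite)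
    (hne : ∀ a : A, [] ∉ (ϑ a).support)
    (hprim : Primitive ϑ) (hexp : Expanding ϑ) :
    (∃ C K : ℝ, 0 < C ∧ 0 < K ∧ ∀ a : A, ∀ᶠ n : ℕ in Filter.atTop,
      (iterPMF ϑ n a).toOuterMeasure {w | (w.length : ℝ) < K * n} ≤
        ENNReal.ofReal (Real.exp (-C * n))) ∧
    (∀ (Ω : Type) [MeasurableSpace Ω] (μ : Measure Ω), IsProbabilityMeasure μ →
      ∀ (a : A) (X : ℕ → Ω → List A),
        (∀ (n : ℕ) (s : Set (List A)), μ (X n ⁻¹' s) = (iterPMF ϑ n a).toOuterMeasure s) →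
        ∀ᵐ ω ∂μ, Filter.Tendsto (fun n => (X n ω).length) Filter.atTop Filter.atTop) :=
  stmt12_general ϑ hne hprim hexp

end RS
end

section
/- Let \mathbb{X}_\zeta \subset \{a,b\}^{\mathbb{Z}} be the subshift generated by the random substitution \zeta: a, b \mapsto \{ab, ba\} with probabilities p and 1-p (0 < p < 1), and \mu the associated frequency measure. Then the metric entropy of the shift with respect to \mu is h_\mu = -(1/2)(p \log p + (1-p)\log(1-p)). -/
namespace RS

variable {A : Type*} [Fintype A] [DecidableEq A]

/-- The joint distribution of the tuple `(ϑ(u_1), …, ϑ(u_m))` of independent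
inflation words of the letters of `u`. -/
noncomputable def tupleStep (ϑ : A → PMF (List A)) : List A → PMF (List (List A))
  | [] => PMF.pure []
  | a :: u => (ϑ a).bind fun w => (tupleStep ϑ u).map (w :: ·)

/-- The number of occurrences of `v` as a letter of the induced word `ϑ_ℓ(u)`. -/
def indCount (v : List A) (ws : List (List A)) : ℕ :=
  (List.range ws.headI.length).countP fun i => (ws.flatten.drop i).take v.length == v

/-- The mean matrix of the induced substitution: `(M_{ϑ_ℓ})_{v u} = E[|ϑ_ℓ(u)|_v]`. -/
noncomputable def inducedMean (ϑ : A → PMF (List A)) (v u : List A) : ℝ :=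
  ∑' ws : List (List A), ((tupleStep ϑ u) ws).toReal * (indCount v ws : ℝ)

/-- The random substitution `ζ : a, b ↦ ab` (prob. `p`), `ba` (prob. `1-p`),
with `a = false`, `b = true`. -/
noncomputable def zeta (p : ℝ) (hp : p ≤ 1) : Bool → PMF (List Bool) := fun _ =>
  (PMF.bernoulli (Real.toNNReal p) (Real.toNNReal_le_one.mpr hp)).map
    (fun t => if t then [false, true] else [true, false])

/-!
Since `ζ(a)` and `ζ(b)` have the same distribution, the column of the induced substitution
matrix indexed by a word `u` depends only on `|u| = n`: it is the vector of expected numbers of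
occurrences of `v` at positions `0` and `1` of `ζ(aⁿ)`. Hence the normalised eigenvector
equation forces `μ([v]) = (P₀(v) + P₁(v)) / 2`, where `P₀(v)`, `P₁(v)` are the probabilities
that `v` occurs at position `0`, resp. `1`, of `ζ(aⁿ)`, a concatenation of independent
blocks `ab` (probability `p`) and `ba`. Both factorise over the blocks, so their entropies on
words of length `n` can be computed exactly and add up to `(n + 1) H(p)`. Averaging two
probability vectors changes the entropy by at most `log 2`, so the entropy of `μ` on words of
length `n` is `n H(p) / 2 + O(1)`.
-/

open scoped ENNReal

section Expectation

variable {α β : Type*}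

noncomputable def expect (q : PMF α) (G : α → ℝ≥0∞) : ℝ≥0∞ := ∑' x, q x * G x

lemma expect_pure (x : α) (G : α → ℝ≥0∞) : expect (PMF.pure x) G = G x := by
  rw [expect, tsum_eq_single x fun y hy => by simp [PMF.pure_apply, hy]]
  simp

lemma expect_bind (q : PMF α) (k : α → PMF β) (G : β → ℝ≥0∞) :
    expect (q.bind k) G = expect q fun x => expect (k x) G := by
  simp only [expect, PMF.bind_apply, ← ENNReal.tsum_mul_right, ← ENNReal.tsum_mul_left,
    mul_assoc]
  exact ENNReal.tsum_comm

lemma expect_map (q : PMF α) (f : α → β) (G : β → ℝ≥0∞) :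
    expect (q.map f) G = expect q (G ∘ f) := by
  simp [PMF.map, expect_bind, expect_pure, Function.comp_def]

lemma expect_add (q : PMF α) (G H : α → ℝ≥0∞) :
    expect q (fun x => G x + H x) = expect q G + expect q H := by
  simp only [expect, mul_add, ENNReal.tsum_add]

lemma expect_const (q : PMF α) (c : ℝ≥0∞) : expect q (fun _ => c) = c := by
  simp [expect, ENNReal.tsum_mul_right, q.tsum_coe]

lemma expect_congr (q : PMF α) {G H : α → ℝ≥0∞} (h : ∀ x ∈ q.support, G x = H x) :
    expect q G = expect q H := by
  refine tsum_congr fun x => ?_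
  by_cases hx : q x = 0
  · simp [hx]
  · rw [h x hx]

end Expectation

section InducedSubstitution

variable {α : Type*}

lemma tupleStep_eq_of_length_eq {ϑ : α → PMF (List α)} (hϑ : ∀ a b, ϑ a = ϑ b) :
    ∀ {u u' : List α}, u.length = u'.length → tupleStep ϑ u = tupleStep ϑ u'
  | [], [], _ => rfl
  | a :: u, a' :: u', h => by
    simp only [tupleStep, hϑ a a', tupleStep_eq_of_length_eq hϑ (Nat.succ.inj h)]

lemma stepPMF_eq_map_flatten (ϑ : α → PMF (List α)) :
    ∀ u : List α, stepPMF ϑ u = (tupleStep ϑ u).map List.flatten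
  | [] => by simp [stepPMF, tupleStep, PMF.pure_map]
  | a :: u => by
    simp only [stepPMF, tupleStep, PMF.map_bind, PMF.map_comp, stepPMF_eq_map_flatten ϑ u]
    rfl

variable [DecidableEq α]

lemma inducedMean_eq_of_length_eq {ϑ : α → PMF (List α)} (hϑ : ∀ a b, ϑ a = ϑ b)
    (v : List α) {u u' : List α} (h : u.length = u'.length) :
    inducedMean ϑ v u = inducedMean ϑ v u' := by
  rw [inducedMean, inducedMean, tupleStep_eq_of_length_eq hϑ h]

lemma inducedMean_eq_toReal_expect (ϑ : α → PMF (List α)) (v u : List α) :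
    inducedMean ϑ v u = (expect (tupleStep ϑ u) fun ws => indCount v ws).toReal := by
  rw [expect, ENNReal.tsum_toReal_eq fun ws => ENNReal.mul_ne_top (PMF.apply_ne_top _ _)
    (ENNReal.natCast_ne_top _)]
  simp [inducedMean]

lemma exists_indCount_ne_zero_of_inducedMean_ne_zero {ϑ : α → PMF (List α)} {v u : List α}
    (h : inducedMean ϑ v u ≠ 0) :
    ∃ ws ∈ (tupleStep ϑ u).support, indCount v ws ≠ 0 := by
  contrapose! h
  refine (tsum_congr fun ws => ?_).trans tsum_zero
  by_cases hws : ws ∈ (tupleStep ϑ u).support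
  · simp [h ws hws]
  · simp [(PMF.apply_eq_zero_iff _ _).mpr hws]

lemma infix_flatten_of_indCount_ne_zero {v : List α} {ws : List (List α)}
    (h : indCount v ws ≠ 0) : v <:+: ws.flatten := by
  obtain ⟨i, -, hi⟩ := List.countP_pos_iff.mp (Nat.pos_of_ne_zero h)
  rw [beq_iff_eq] at hi
  exact hi ▸ (List.take_prefix _ _).isInfix.trans (List.drop_suffix _ _).isInfix

lemma indCount_cons_of_length_eq_two {w : List α} (hw : w.length = 2) (v : List α)
    (ws : List (List α)) :
    indCount v (w :: ws) = (if v <+: (w :: ws).flatten then 1 else 0) +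
      (if v <+: (w :: ws).flatten.tail then 1 else 0) := by
  simp only [indCount, List.headI_cons, hw, show List.range 2 = [0, 1] from rfl,
    List.countP_cons, List.countP_nil, List.drop_zero, List.drop_one, beq_iff_eq,
    List.prefix_iff_eq_take, eq_comm (a := v)]
  simp only [zero_add, add_comm]

end InducedSubstitution

section Zeta

variable {p : ℝ}

def IsBlock (w : List Bool) : Prop := w = [false, true] ∨ w = [true, false]

lemma IsBlock.length_eq {w : List Bool} (hw : IsBlock w) : w.length = 2 := by
  rcases hw with rfl | rfl <;> rfl

lemma expect_zeta (hp0 : 0 ≤ p) (hp : p ≤ 1) (a : Bool) (G : List Bool → ℝ≥0∞) :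
    expect (zeta p hp a) G =
      ENNReal.ofReal p * G [false, true] + ENNReal.ofReal (1 - p) * G [true, false] := by
  rw [zeta, expect_map, expect, tsum_bool]
  simp only [PMF.bernoulli_apply, Function.comp_apply, cond_false, cond_true]
  rw [ENNReal.ofReal_sub _ hp0, ENNReal.ofReal_one, add_comm]
  rfl

lemma isBlock_of_mem_support_zeta {hp : p ≤ 1} {a : Bool} {w : List Bool}
    (hw : w ∈ (zeta p hp a).support) : IsBlock w := by
  obtain ⟨t, -, rfl⟩ := (PMF.mem_support_map_iff _ _ _).mp hw
  cases t
  exacts [Or.inr rfl, Or.inl rfl]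

lemma mem_support_zeta (hp0 : 0 < p) (hp1 : p < 1) (a : Bool) {w : List Bool}
    (hw : IsBlock w) : w ∈ (zeta p hp1.le a).support := by
  rw [zeta, PMF.mem_support_map_iff]
  rcases hw with rfl | rfl
  · refine ⟨true, ?_, rfl⟩
    simpa [PMF.bernoulli_apply] using hp0
  · refine ⟨false, ?_, rfl⟩
    simpa [PMF.bernoulli_apply, tsub_eq_zero_iff_le, ENNReal.coe_lt_one_iff] using hp1

end Zeta

section Legal

variable {p : ℝ}

lemma forall_isBlock_of_mem_support_tupleStep (hp : p ≤ 1) :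
    ∀ {u : List Bool} {ws : List (List Bool)}, ws ∈ (tupleStep (zeta p hp) u).support →
      ws.length = u.length ∧ ∀ w ∈ ws, IsBlock w
  | [], ws, h => by simp_all [tupleStep]
  | a :: u, ws, h => by
    obtain ⟨w, hw, h⟩ := (PMF.mem_support_bind_iff _ _ _).mp h
    obtain ⟨ws, hws, rfl⟩ := (PMF.mem_support_map_iff _ _ _).mp h
    obtain ⟨hlen, hblocks⟩ := forall_isBlock_of_mem_support_tupleStep hp hws
    simpa [hlen] using ⟨isBlock_of_mem_support_zeta hw, hblocks⟩

lemma mem_support_tupleStep_zeta (hp0 : 0 < p) (hp1 : p < 1) :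
    ∀ {u : List Bool} {ws : List (List Bool)}, ws.length = u.length →
      (∀ w ∈ ws, IsBlock w) → ws ∈ (tupleStep (zeta p hp1.le) u).support
  | [], [], _, _ => by simp [tupleStep]
  | a :: u, w :: ws, hlen, hblocks => by
    refine (PMF.mem_support_bind_iff _ _ _).mpr
      ⟨w, mem_support_zeta hp0 hp1 a (hblocks w List.mem_cons_self), ?_⟩
    exact (PMF.mem_support_map_iff _ _ _).mpr ⟨ws, mem_support_tupleStep_zeta hp0 hp1
      (Nat.succ.inj hlen) fun w' hw' => hblocks w' (List.mem_cons_of_mem w hw'), rfl⟩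

lemma flatten_mem_support_iterPMF_succ (hp0 : 0 < p) (hp1 : p < 1) {m : ℕ} {a : Bool}
    {u : List Bool} (hu : u ∈ (iterPMF (zeta p hp1.le) m a).support)
    {ws : List (List Bool)} (hlen : ws.length = u.length) (hblocks : ∀ w ∈ ws, IsBlock w) :
    ws.flatten ∈ (iterPMF (zeta p hp1.le) (m + 1) a).support := by
  refine (PMF.mem_support_bind_iff _ _ _).mpr ⟨u, hu, ?_⟩
  rw [stepPMF_eq_map_flatten, PMF.mem_support_map_iff]
  exact ⟨ws, mem_support_tupleStep_zeta hp0 hp1 hlen hblocks, rfl⟩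

lemma exists_mem_support_iterPMF_length_eq (hp0 : 0 < p) (hp1 : p < 1) :
    ∀ m : ℕ, ∃ u ∈ (iterPMF (zeta p hp1.le) m false).support, u.length = 2 ^ m
  | 0 => ⟨[false], by simp [iterPMF], rfl⟩
  | m + 1 => by
    obtain ⟨u, hu, hlen⟩ := exists_mem_support_iterPMF_length_eq hp0 hp1 m
    have hblocks : ∀ w ∈ List.replicate u.length [false, true], IsBlock w :=
      fun w hw => Or.inl (List.eq_of_mem_replicate hw)
    refine ⟨_, flatten_mem_support_iterPMF_succ hp0 hp1 hu List.length_replicate hblocks, ?_⟩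
    simp [List.length_flatten, hlen, pow_succ]

lemma legal_of_infix_flatten (hp0 : 0 < p) (hp1 : p < 1) {v : List Bool}
    {ws : List (List Bool)} (hblocks : ∀ w ∈ ws, IsBlock w) (hv : v <:+: ws.flatten) :
    Legal (zeta p hp1.le) v := by
  -- pad `ws` with blocks up to the length `2 ^ |ws|` of a realisation of `ζ^|ws|(a)`
  obtain ⟨u, hu, hlen⟩ := exists_mem_support_iterPMF_length_eq hp0 hp1 ws.length
  set padded := ws ++ List.replicate (u.length - ws.length) [false, true]
  have hpadded : padded.length = u.length := by
    have := ws.length.lt_two_pow_self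
    simp only [padded, List.length_append, List.length_replicate]
    omega
  have hblocks' : ∀ w ∈ padded, IsBlock w := by
    simp only [padded, List.mem_append]
    rintro w (hw | hw)
    exacts [hblocks w hw, Or.inl (List.eq_of_mem_replicate hw)]
  refine ⟨_, false, _, flatten_mem_support_iterPMF_succ hp0 hp1 hu hpadded hblocks', ?_⟩
  exact hv.trans (by simpa [padded] using (List.prefix_append _ _).isInfix)

lemma legal_of_inducedMean_ne_zero (hp0 : 0 < p) (hp1 : p < 1) {v u : List Bool}
    (h : inducedMean (zeta p hp1.le) v u ≠ 0) : Legal (zeta p hp1.le) v := by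
  obtain ⟨ws, hws, hcount⟩ := exists_indCount_ne_zero_of_inducedMean_ne_zero h
  exact legal_of_infix_flatten hp0 hp1 (forall_isBlock_of_mem_support_tupleStep _ hws).2
    (infix_flatten_of_indCount_ne_zero hcount)

end Legal

section BlockProbabilities

variable (p : ℝ)

/- `ζ(aⁿ)` is a concatenation of `n` independent blocks, `ab` with probability `p` and `ba`
otherwise (`a = false`); `headProb`, `lastProb` and `blockProb` are the laws of the first
letter, the last letter and the whole of a block. For `|v| ≤ 2n`, `alignedProb p v` is the
probability that `v` is a prefix of `ζ(aⁿ)`, and `offsetProb p v` that it occurs at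
position `1`. -/

noncomputable def headProb (x : Bool) : ℝ := if x then 1 - p else p

noncomputable def lastProb (x : Bool) : ℝ := if x then p else 1 - p

noncomputable def blockProb (x y : Bool) : ℝ := if x = y then 0 else headProb p x

noncomputable def alignedProb : List Bool → ℝ
  | [] => 1
  | [x] => headProb p x
  | x :: y :: t => blockProb p x y * alignedProb t

noncomputable def offsetProb : List Bool → ℝ
  | [] => 1
  | x :: t => lastProb p x * alignedProb p t

variable {p}

lemma headProb_nonneg (hp0 : 0 ≤ p) (hp1 : p ≤ 1) (x : Bool) : 0 ≤ headProb p x := by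
  cases x <;> simp [headProb] <;> linarith

lemma lastProb_nonneg (hp0 : 0 ≤ p) (hp1 : p ≤ 1) (x : Bool) : 0 ≤ lastProb p x := by
  cases x <;> simp [lastProb] <;> linarith

lemma blockProb_nonneg (hp0 : 0 ≤ p) (hp1 : p ≤ 1) (x y : Bool) : 0 ≤ blockProb p x y := by
  unfold blockProb
  split_ifs
  exacts [le_rfl, headProb_nonneg hp0 hp1 x]

lemma alignedProb_nonneg (hp0 : 0 ≤ p) (hp1 : p ≤ 1) : ∀ v : List Bool, 0 ≤ alignedProb p v
  | [] => zero_le_one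
  | [x] => headProb_nonneg hp0 hp1 x
  | x :: y :: t => mul_nonneg (blockProb_nonneg hp0 hp1 x y) (alignedProb_nonneg hp0 hp1 t)

lemma offsetProb_nonneg (hp0 : 0 ≤ p) (hp1 : p ≤ 1) : ∀ v : List Bool, 0 ≤ offsetProb p v
  | [] => zero_le_one
  | x :: t => mul_nonneg (lastProb_nonneg hp0 hp1 x) (alignedProb_nonneg hp0 hp1 t)

lemma expect_tupleStep_replicate_succ (hp0 : 0 ≤ p) (hp : p ≤ 1) (n : ℕ)
    (G : List (List Bool) → ℝ≥0∞) :
    expect (tupleStep (zeta p hp) (List.replicate (n + 1) false)) G =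
      ENNReal.ofReal p * expect (tupleStep (zeta p hp) (List.replicate n false))
          (fun ws => G ([false, true] :: ws)) +
        ENNReal.ofReal (1 - p) * expect (tupleStep (zeta p hp) (List.replicate n false))
          (fun ws => G ([true, false] :: ws)) := by
  rw [List.replicate_succ, tupleStep, expect_bind, expect_zeta hp0 hp, expect_map, expect_map]
  rfl

lemma expect_prefix_flatten (hp0 : 0 ≤ p) (hp : p ≤ 1) :
    ∀ (n : ℕ) (v : List Bool), v.length ≤ 2 * n →
      expect (tupleStep (zeta p hp) (List.replicate n false))
          (fun ws => if v <+: ws.flatten then 1 else 0) = ENNReal.ofReal (alignedProb p v)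
  | _, [], _ => by simp [alignedProb, expect_const]
  | 0, _ :: _, hv => absurd hv (by simp)
  | n + 1, [x], _ => by
    rw [expect_tupleStep_replicate_succ hp0 hp]
    cases x <;> simp [expect_const, alignedProb, headProb]
  | n + 1, x :: y :: t, hv => by
    have ih := expect_prefix_flatten hp0 hp n t (by simp at hv; omega)
    rw [expect_tupleStep_replicate_succ hp0 hp]
    cases x <;> cases y <;> simp [expect_const, ih, alignedProb, blockProb, headProb,
      ENNReal.ofReal_mul, hp0, hp]

lemma expect_prefix_flatten_tail (hp0 : 0 ≤ p) (hp : p ≤ 1) (n : ℕ) :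
    ∀ v : List Bool, v.length ≤ 2 * n + 1 →
      expect (tupleStep (zeta p hp) (List.replicate (n + 1) false))
          (fun ws => if v <+: ws.flatten.tail then 1 else 0) = ENNReal.ofReal (offsetProb p v)
  | [], _ => by simp [offsetProb, expect_const]
  | x :: t, hv => by
    have h := expect_prefix_flatten hp0 hp n t (by simp at hv; omega)
    rw [expect_tupleStep_replicate_succ hp0 hp]
    cases x <;> simp [expect_const, h, offsetProb, lastProb, ENNReal.ofReal_mul, hp0, hp]

lemma inducedMean_zeta_replicate (hp0 : 0 ≤ p) (hp : p ≤ 1) {n : ℕ} {v : List Bool}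
    (hv : v.length = n + 1) :
    inducedMean (zeta p hp) v (List.replicate (n + 1) false) =
      alignedProb p v + offsetProb p v := by
  have hcount : ∀ ws ∈ (tupleStep (zeta p hp) (List.replicate (n + 1) false)).support,
      (indCount v ws : ℝ≥0∞) =
        (if v <+: ws.flatten then 1 else 0) + (if v <+: ws.flatten.tail then 1 else 0) := by
    intro ws hws
    obtain ⟨hlen, hblocks⟩ := forall_isBlock_of_mem_support_tupleStep hp hws
    obtain ⟨w, ws, rfl⟩ :=
      List.exists_cons_of_length_eq_add_one (hlen.trans List.length_replicate)
    rw [indCount_cons_of_length_eq_two (hblocks w List.mem_cons_self).length_eq]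
    push_cast
    rfl
  rw [inducedMean_eq_toReal_expect, expect_congr _ hcount, expect_add,
    expect_prefix_flatten hp0 hp _ _ (by omega), expect_prefix_flatten_tail hp0 hp _ _ (by omega),
    ENNReal.toReal_add ENNReal.ofReal_ne_top ENNReal.ofReal_ne_top,
    ENNReal.toReal_ofReal (alignedProb_nonneg hp0 hp v),
    ENNReal.toReal_ofReal (offsetProb_nonneg hp0 hp v)]

end BlockProbabilities

section Words

def words : ℕ → Finset (List Bool)
  | 0 => {[]}
  | n + 1 => ((Finset.univ : Finset Bool) ×ˢ words n).image fun xt => xt.1 :: xt.2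

lemma mem_words : ∀ {n : ℕ} {v : List Bool}, v ∈ words n ↔ v.length = n
  | 0, v => by simp [words]
  | n + 1, [] => by simp [words]
  | n + 1, x :: t => by simp [words, mem_words]

lemma sum_words_succ {M : Type*} [AddCommMonoid M] (n : ℕ) (f : List Bool → M) :
    ∑ v ∈ words (n + 1), f v = ∑ x : Bool, ∑ t ∈ words n, f (x :: t) := by
  rw [words, Finset.sum_image fun _ _ _ _ h => Prod.ext (List.cons.inj h).1 (List.cons.inj h).2,
    Finset.sum_product]

variable {p : ℝ}

lemma sum_alignedProb : ∀ n : ℕ, ∑ v ∈ words n, alignedProb p v = 1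
  | 0 => by simp [words, alignedProb]
  | 1 => by simp [words, alignedProb, headProb]
  | n + 2 => by
    simp [sum_words_succ, alignedProb, ← Finset.mul_sum, sum_alignedProb n, blockProb, headProb]

lemma sum_offsetProb : ∀ n : ℕ, ∑ v ∈ words n, offsetProb p v = 1
  | 0 => by simp [words, offsetProb]
  | n + 1 => by
    simp [sum_words_succ, offsetProb, ← Finset.mul_sum, sum_alignedProb n, lastProb]

end Words

section Entropy

open Real

lemma sum_negMulLog_mul_left {ι : Type*} (s : Finset ι) (c : ℝ) (f : ι → ℝ) :
    ∑ i ∈ s, negMulLog (c * f i) =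
      (∑ i ∈ s, f i) * negMulLog c + c * ∑ i ∈ s, negMulLog (f i) := by
  simp only [negMulLog_mul, Finset.sum_add_distrib, Finset.sum_mul, Finset.mul_sum]

lemma negMulLog_add_le {a b : ℝ} (ha : 0 ≤ a) (hb : 0 ≤ b) :
    negMulLog (a + b) ≤ negMulLog a + negMulLog b := by
  rcases ha.eq_or_lt with rfl | ha
  · simp
  rcases hb.eq_or_lt with rfl | hb
  · simp
  have hlog_a := log_le_log ha (le_add_of_nonneg_right hb.le)
  have hlog_b := log_le_log hb (le_add_of_nonneg_left ha.le)
  simp only [negMulLog]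
  nlinarith

lemma negMulLog_half (a : ℝ) : negMulLog (a / 2) = negMulLog a / 2 + a / 2 * log 2 := by
  rw [div_eq_mul_inv, negMulLog_mul]
  simp only [negMulLog, log_inv]
  ring

lemma negMulLog_average_le {a b : ℝ} (ha : 0 ≤ a) (hb : 0 ≤ b) :
    negMulLog ((a + b) / 2) ≤ (negMulLog a + negMulLog b) / 2 + (a + b) / 2 * log 2 := by
  have h := negMulLog_add_le (div_nonneg ha zero_le_two) (div_nonneg hb zero_le_two)
  rw [negMulLog_half a, negMulLog_half b] at h
  rw [add_div]
  linarith

lemma le_negMulLog_average {a b : ℝ} (ha : 0 ≤ a) (hb : 0 ≤ b) :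
    (negMulLog a + negMulLog b) / 2 ≤ negMulLog ((a + b) / 2) := by
  have h := concaveOn_negMulLog.2 (Set.mem_Ici.2 ha) (Set.mem_Ici.2 hb)
    (by norm_num : (0 : ℝ) ≤ 1 / 2) (by norm_num : (0 : ℝ) ≤ 1 / 2) (by norm_num)
  simp only [smul_eq_mul] at h
  rw [show (a + b) / 2 = 1 / 2 * a + 1 / 2 * b by ring]
  linarith

lemma sum_negMulLog_average_mem_Icc {ι : Type*} (s : Finset ι) {f g : ι → ℝ}
    (hf : ∀ i, 0 ≤ f i) (hg : ∀ i, 0 ≤ g i) (hf1 : ∑ i ∈ s, f i = 1)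
    (hg1 : ∑ i ∈ s, g i = 1) :
    ∑ i ∈ s, negMulLog ((f i + g i) / 2) ∈ Set.Icc
      ((∑ i ∈ s, negMulLog (f i) + ∑ i ∈ s, negMulLog (g i)) / 2)
      ((∑ i ∈ s, negMulLog (f i) + ∑ i ∈ s, negMulLog (g i)) / 2 + log 2) := by
  constructor
  · rw [← Finset.sum_add_distrib, Finset.sum_div]
    exact Finset.sum_le_sum fun i _ => le_negMulLog_average (hf i) (hg i)
  · calc ∑ i ∈ s, negMulLog ((f i + g i) / 2)
        ≤ ∑ i ∈ s, ((negMulLog (f i) + negMulLog (g i)) / 2 + (f i + g i) / 2 * log 2) :=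
          Finset.sum_le_sum fun i _ => negMulLog_average_le (hf i) (hg i)
      _ = _ := by
          rw [Finset.sum_add_distrib, ← Finset.sum_div, ← Finset.sum_mul, ← Finset.sum_div,
            Finset.sum_add_distrib, Finset.sum_add_distrib, hf1, hg1]
          ring

end Entropy

section BlockEntropy

open Real

variable {p : ℝ}

lemma sum_negMulLog_alignedProb_add_two (n : ℕ) :
    ∑ v ∈ words (n + 2), negMulLog (alignedProb p v) =
      ∑ v ∈ words n, negMulLog (alignedProb p v) + binEntropy p := by
  simp only [sum_words_succ, Fintype.sum_bool, alignedProb, sum_negMulLog_mul_left,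
    sum_alignedProb]
  simp [blockProb, headProb, binEntropy_eq_negMulLog_add_negMulLog_one_sub]
  ring

lemma sum_negMulLog_offsetProb_succ (n : ℕ) :
    ∑ v ∈ words (n + 1), negMulLog (offsetProb p v) =
      binEntropy p + ∑ v ∈ words n, negMulLog (alignedProb p v) := by
  simp only [sum_words_succ, Fintype.sum_bool, offsetProb, sum_negMulLog_mul_left,
    sum_alignedProb]
  simp [lastProb, binEntropy_eq_negMulLog_add_negMulLog_one_sub]
  ring

lemma sum_negMulLog_alignedProb_succ_add : ∀ n : ℕ,
    ∑ v ∈ words (n + 1), negMulLog (alignedProb p v) +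
      ∑ v ∈ words n, negMulLog (alignedProb p v) = (n + 1) * binEntropy p
  | 0 => by
    simp [words, alignedProb, headProb, binEntropy_eq_negMulLog_add_negMulLog_one_sub, add_comm]
  | n + 1 => by
    rw [sum_negMulLog_alignedProb_add_two]
    have ih := sum_negMulLog_alignedProb_succ_add n
    push_cast
    linarith

lemma sum_negMulLog_alignedProb_add_offsetProb (n : ℕ) :
    ∑ v ∈ words (n + 1), negMulLog (alignedProb p v) +
      ∑ v ∈ words (n + 1), negMulLog (offsetProb p v) = (n + 2) * binEntropy p := by
  rw [sum_negMulLog_offsetProb_succ, ← add_assoc, add_right_comm,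
    sum_negMulLog_alignedProb_succ_add]
  ring

lemma abs_sum_negMulLog_average_sub_le (hp0 : 0 ≤ p) (hp1 : p ≤ 1) {n : ℕ} (hn : 1 ≤ n) :
    |∑ v ∈ words n, negMulLog ((alignedProb p v + offsetProb p v) / 2) -
      n * (binEntropy p / 2)| ≤ binEntropy p / 2 + log 2 := by
  obtain ⟨m, rfl⟩ := Nat.exists_eq_add_of_le' hn
  obtain ⟨hlower, hupper⟩ := sum_negMulLog_average_mem_Icc (words (m + 1))
    (alignedProb_nonneg hp0 hp1) (offsetProb_nonneg hp0 hp1) (sum_alignedProb _)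
    (sum_offsetProb _)
  rw [sum_negMulLog_alignedProb_add_offsetProb] at hlower hupper
  have hentropy := binEntropy_nonneg hp0 hp1
  push_cast
  rw [abs_le]
  constructor <;> linarith

end BlockEntropy

section PerronVector

open Real

variable {p : ℝ}

lemma eigenvector_eq_half_alignedProb_add_offsetProb (hp0 : 0 ≤ p) (hp : p ≤ 1)
    {R : List Bool → ℝ} {n : ℕ}
    (hnorm : ∑' w : {w : List Bool // Legal (zeta p hp) w ∧ w.length = n + 1}, R w.val = 1)
    {v : List Bool} (hv : v.length = n + 1)
    (heig : ∑' u : {u : List Bool // Legal (zeta p hp) u ∧ u.length = n + 1},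
      inducedMean (zeta p hp) v u.val * R u.val = 2 * R v) :
    R v = (alignedProb p v + offsetProb p v) / 2 := by
  have hmean : ∀ u : {u : List Bool // Legal (zeta p hp) u ∧ u.length = n + 1},
      inducedMean (zeta p hp) v u.val = alignedProb p v + offsetProb p v := fun u =>
    (inducedMean_eq_of_length_eq (fun _ _ => rfl) v (u.2.2.trans List.length_replicate.symm)).trans
      (inducedMean_zeta_replicate hp0 hp hv)
  simp only [hmean, tsum_mul_left, hnorm, mul_one] at heig
  linarith

lemma tsum_mul_log_eq_neg_sum_negMulLog (hp0 : 0 < p) (hp1 : p < 1) {R : List Bool → ℝ}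
    {n : ℕ} (hR : ∀ v, Legal (zeta p hp1.le) v → v.length = n + 1 →
      R v = (alignedProb p v + offsetProb p v) / 2) :
    ∑' w : {w : List Bool // Legal (zeta p hp1.le) w ∧ w.length = n + 1},
        R w.val * log (R w.val) =
      -∑ v ∈ words (n + 1), negMulLog ((alignedProb p v + offsetProb p v) / 2) := by
  have hillegal : ∀ v, v.length = n + 1 → ¬Legal (zeta p hp1.le) v →
      alignedProb p v + offsetProb p v = 0 := by
    intro v hv hv'
    by_contra h
    rw [← inducedMean_zeta_replicate hp0.le hp1.le hv] at h
    exact hv' (legal_of_inducedMean_ne_zero hp0 hp1 h)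
  rw [← Finset.sum_neg_distrib]
  refine (tsum_subtype {w | Legal (zeta p hp1.le) w ∧ w.length = n + 1}
    fun w => R w * log (R w)).trans (tsum_eq_sum fun v hv => ?_) |>.trans
    (Finset.sum_congr rfl fun v hv => ?_)
  · simp_all [mem_words]
  · rw [mem_words] at hv
    by_cases hlegal : Legal (zeta p hp1.le) v
    · simp [hlegal, hv, hR v hlegal hv, negMulLog]
    · simp [hlegal, hillegal v hv hlegal]

end PerronVector

open Filter Topology in
lemma tendsto_div_natCast_of_abs_sub_mul_le {a : ℕ → ℝ} {c C : ℝ}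
    (h : ∀ᶠ n in atTop, |a n - n * c| ≤ C) : Tendsto (fun n => a n / n) atTop (𝓝 c) := by
  have hdev : Tendsto (fun n : ℕ => (a n - n * c) / n) atTop (𝓝 0) := by
    refine squeeze_zero_norm' ?_ (tendsto_const_div_atTop_nhds_zero_nat C)
    filter_upwards [h] with n hn
    rw [norm_div, Real.norm_natCast, Real.norm_eq_abs]
    exact div_le_div_of_nonneg_right hn n.cast_nonneg
  have hlim := hdev.add_const c
  rw [zero_add] at hlim
  refine hlim.congr' ?_
  filter_upwards [eventually_ne_atTop 0] with n hn
  field_simp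
  ring

open Filter in
theorem stmt15_general (p : ℝ) (hp0 : 0 < p) (hp1 : p < 1)
    (R : List Bool → ℝ)
    (hRnorm : ∀ n : ℕ, 1 ≤ n →
      ∑' w : {w : List Bool // Legal (zeta p hp1.le) w ∧ w.length = n}, R w.val = 1)
    (hReig : ∀ n : ℕ, 1 ≤ n → ∀ v : List Bool,
      Legal (zeta p hp1.le) v → v.length = n →
      ∑' u : {u : List Bool // Legal (zeta p hp1.le) u ∧ u.length = n},
        inducedMean (zeta p hp1.le) v u.val * R u.val = 2 * R v) :
    Filter.Tendsto
      (fun n : ℕ => -(1 / (n : ℝ)) *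
        ∑' w : {w : List Bool // Legal (zeta p hp1.le) w ∧ w.length = n},
          R w.val * Real.log (R w.val))
      Filter.atTop
      (nhds (-(1 / 2) * (p * Real.log p + (1 - p) * Real.log (1 - p)))) := by
  have hR : ∀ n v, Legal (zeta p hp1.le) v → v.length = n + 1 →
      R v = (alignedProb p v + offsetProb p v) / 2 := fun n v hv hlen =>
    eigenvector_eq_half_alignedProb_add_offsetProb hp0.le hp1.le (hRnorm (n + 1) n.succ_pos) hlen
      (hReig (n + 1) n.succ_pos v hv hlen)
  have hlimit : -(1 / 2) * (p * Real.log p + (1 - p) * Real.log (1 - p)) =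
      Real.binEntropy p / 2 := by
    simp only [Real.binEntropy_eq_negMulLog_add_negMulLog_one_sub, Real.negMulLog]
    ring
  rw [hlimit]
  refine (tendsto_div_natCast_of_abs_sub_mul_le ((eventually_ge_atTop 1).mono fun n hn =>
    abs_sum_negMulLog_average_sub_le hp0.le hp1.le hn)).congr' ?_
  filter_upwards [eventually_ge_atTop 1] with n hn
  obtain ⟨m, rfl⟩ := Nat.exists_eq_add_of_le' hn
  rw [tsum_mul_log_eq_neg_sum_negMulLog hp0 hp1 (hR m)]
  ring

open Filter in
/-- the metric entropy of the frequency measure `μ` of the random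
substitution `ζ : a, b ↦ {ab (prob p), ba (prob 1-p)}` is
`h_μ = -(1/2)(p log p + (1-p) log(1-p))`.  The frequency measure assigns to the
cylinder of a legal word `w` of length `n` the entry `R w` of the normalized positive
right Perron eigenvector (eigenvalue `2`) of the induced substitution matrix, and
`h_μ = lim_n -(1/n) ∑_{w ∈ L^n} μ([w]) log μ([w])`. -/
theorem stmt15 (p : ℝ) (hp0 : 0 < p) (hp1 : p < 1)
    (R : List Bool → ℝ)
    (hRpos : ∀ w : List Bool, Legal (zeta p hp1.le) w → 0 < R w)
    (hRnorm : ∀ n : ℕ, 1 ≤ n →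
      ∑' w : {w : List Bool // Legal (zeta p hp1.le) w ∧ w.length = n}, R w.val = 1)
    (hReig : ∀ n : ℕ, 1 ≤ n → ∀ v : List Bool,
      Legal (zeta p hp1.le) v → v.length = n →
      ∑' u : {u : List Bool // Legal (zeta p hp1.le) u ∧ u.length = n},
        inducedMean (zeta p hp1.le) v u.val * R u.val = 2 * R v) :
    Filter.Tendsto
      (fun n : ℕ => -(1 / (n : ℝ)) *
        ∑' w : {w : List Bool // Legal (zeta p hp1.le) w ∧ w.length = n},
          R w.val * Real.log (R w.val))
      Filter.atTop
      (nhds (-(1 / 2) * (p * Real.log p + (1 - p) * Real.log (1 - p)))) :=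
  stmt15_general p hp0 hp1 R hRnorm hReig

end RS
end

section
/- Let X be a subshift with topological entropy h(X), \mu a shift-invariant Borel probability measure on X, and suppose there exist constants c_1, c_2 > 0 such that for infinitely many n and every legal word w of length n, c_1 / |\mathcal{L}^n| \le \mu([w]) \le c_2 / |\mathcal{L}^n|, where \mathcal{L}^n is the set of legal words of length n. Then the measure-theoretic entropy h_\mu equals h(X), so \mu is a measure of maximal entropy. -/
open Filter MeasureTheory

/-!
If `μ [w] ≤ c₂ / |Lⁿ|` for every legal word of length `n`, then, since these masses sum to `1`,
`-∑ μ [w] log μ [w] ≥ -log (c₂ / |Lⁿ|) = log |Lⁿ| - log c₂`. Dividing by `n` and letting `n → ∞`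
along the infinitely many such `n` gives `h_μ ≥ h(X)`; the variational principle gives the
reverse inequality.
-/

/-- A word `w` of length `n` appears in the subshift `X`. -/
def Appears {A : Type*} (X : Set (ℤ → A)) (n : ℕ) (w : Fin n → A) : Prop :=
  ∃ x ∈ X, ∃ k : ℤ, ∀ i : Fin n, x (k + i) = w i

/-- The cylinder set of the word `w` (placed at positions `0, …, n-1`). -/
def Cyl {A : Type*} (n : ℕ) (w : Fin n → A) : Set (ℤ → A) :=
  {x | ∀ i : Fin n, x (i : ℤ) = w i}

lemma cyl_eq_preimage {A : Type*} (n : ℕ) (w : Fin n → A) :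
    Cyl n w = (fun (x : ℤ → A) (i : Fin n) => x i) ⁻¹' {w} := by
  ext x
  simp [Cyl, funext_iff]

lemma measurableSet_cyl {A : Type*} [MeasurableSpace A] [MeasurableSingletonClass A]
    (n : ℕ) (w : Fin n → A) : MeasurableSet (Cyl n w) := by
  rw [cyl_eq_preimage]
  exact measurableSet_preimage (by fun_prop) (measurableSet_singleton w)

lemma sum_measure_cyl {A : Type*} [Fintype A] [MeasurableSpace A] [MeasurableSingletonClass A]
    (μ : Measure (ℤ → A)) [IsProbabilityMeasure μ] (n : ℕ) :
    ∑ w : Fin n → A, μ (Cyl n w) = 1 := by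
  simp only [cyl_eq_preimage]
  rw [sum_measure_preimage_singleton _ fun w _ => cyl_eq_preimage n w ▸ measurableSet_cyl n w,
    Finset.coe_univ, Set.preimage_univ, measure_univ]

lemma tsum_measureReal_cyl_appears {A : Type*} [Fintype A] [MeasurableSpace A]
    [MeasurableSingletonClass A] (X : Set (ℤ → A)) (μ : Measure (ℤ → A)) [IsProbabilityMeasure μ]
    (hsupp : ∀ (n : ℕ) (w : Fin n → A), ¬ Appears X n w → μ (Cyl n w) = 0) (n : ℕ) :
    ∑' w : {w : Fin n → A // Appears X n w}, (μ (Cyl n w.val)).toReal = 1 := by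
  have hsub : Function.support (fun w : Fin n → A => (μ (Cyl n w)).toReal) ⊆
      {w | Appears X n w} := by
    intro w hw
    by_contra h
    simp [hsupp n w h] at hw
  refine (tsum_subtype_eq_of_support_subset hsub).trans ?_
  rw [tsum_fintype, ← ENNReal.toReal_sum fun w _ => measure_ne_top μ _, sum_measure_cyl,
    ENNReal.toReal_one]

lemma mul_log_le_mul_log_of_le {p q : ℝ} (hp : 0 ≤ p) (hpq : p ≤ q) :
    p * Real.log p ≤ p * Real.log q := by
  rcases hp.eq_or_lt with rfl | hp
  · simp
  · exact mul_le_mul_of_nonneg_left (Real.log_le_log hp hpq) hp.le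

lemma tsum_mul_log_le_log_of_le {ι : Type*} [Finite ι] {p : ι → ℝ} {q : ℝ}
    (hp : ∀ i, 0 ≤ p i) (hpq : ∀ i, p i ≤ q) (hsum : ∑' i, p i = 1) :
    ∑' i, p i * Real.log (p i) ≤ Real.log q :=
  calc ∑' i, p i * Real.log (p i) ≤ ∑' i, p i * Real.log q :=
        Summable.tsum_le_tsum (fun i => mul_log_le_mul_log_of_le (hp i) (hpq i))
          Summable.of_finite Summable.of_finite
    _ = Real.log q := by rw [tsum_mul_right, hsum, one_mul]

lemma log_card_sub_log_le_neg_tsum_mul_log {ι : Type*} [Finite ι] {p : ι → ℝ} {c : ℝ}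
    (hc : 0 < c) (hp : ∀ i, 0 ≤ p i) (hpc : ∀ i, p i ≤ c / Nat.card ι) (hsum : ∑' i, p i = 1) :
    Real.log (Nat.card ι) - Real.log c ≤ -∑' i, p i * Real.log (p i) := by
  have : Nonempty ι := by
    by_contra h
    rw [not_nonempty_iff] at h
    simp at hsum
  have hcard : (0 : ℝ) < Nat.card ι := by exact_mod_cast Nat.card_pos
  have hlog := tsum_mul_log_le_log_of_le hp hpc hsum
  rw [Real.log_div hc.ne' hcard.ne'] at hlog
  linarith

theorem stmt17_general {A : Type*} [Fintype A] [MeasurableSpace A] [MeasurableSingletonClass A]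
    (X : Set (ℤ → A))
    (μ : Measure (ℤ → A)) [IsProbabilityMeasure μ]
    (hsupp : ∀ (n : ℕ) (w : Fin n → A), ¬ Appears X n w → μ (Cyl n w) = 0)
    (htopval hμval : ℝ)
    (htop : Filter.Tendsto
      (fun n : ℕ => Real.log (Nat.card {w : Fin n → A // Appears X n w}) / n)
      Filter.atTop (nhds htopval))
    (hent : Filter.Tendsto
      (fun n : ℕ => -(1 / (n : ℝ)) *
        ∑' w : {w : Fin n → A // Appears X n w},
          (μ (Cyl n w.val)).toReal * Real.log ((μ (Cyl n w.val)).toReal))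
      Filter.atTop (nhds hμval))
    (hvar : hμval ≤ htopval)
    (hbound : ∃ c₁ c₂ : ℝ, 0 < c₁ ∧ 0 < c₂ ∧
      ∃ᶠ n : ℕ in Filter.atTop, ∀ w : Fin n → A, Appears X n w →
        ENNReal.ofReal (c₁ / (Nat.card {w' : Fin n → A // Appears X n w'})) ≤ μ (Cyl n w) ∧
        μ (Cyl n w) ≤ ENNReal.ofReal (c₂ / (Nat.card {w' : Fin n → A // Appears X n w'}))) :
    hμval = htopval := by
  obtain ⟨_, c, -, hc, hfreq⟩ := hbound
  have hlim := hent.sub (htop.sub (tendsto_const_div_atTop_nhds_zero_nat (Real.log c)))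
  refine le_antisymm hvar (sub_nonneg.mp ?_)
  rw [sub_zero] at hlim
  refine ge_of_tendsto_of_frequently hlim (hfreq.mono fun n hn => ?_)
  have hn_entropy := log_card_sub_log_le_neg_tsum_mul_log hc (fun _ => ENNReal.toReal_nonneg)
    (fun w => ENNReal.toReal_le_of_le_ofReal (by positivity) (hn w.1 w.2).2)
    (tsum_measureReal_cyl_appears X μ hsupp n)
  rw [sub_nonneg, ← sub_div, neg_mul, ← mul_neg, one_div_mul_eq_div]
  exact div_le_div_of_nonneg_right hn_entropy n.cast_nonneg

/-- if a shift-invariant measure on a subshift gives every legal word of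
length `n` a measure comparable (with uniform constants) to `1/|L^n|` for infinitely
many `n`, then its measure-theoretic entropy equals the topological entropy, i.e. it
is a measure of maximal entropy. -/
theorem stmt17 {A : Type*} [Fintype A] [MeasurableSpace A] [MeasurableSingletonClass A]
    (X : Set (ℤ → A))
    (hXne : X.Nonempty)
    (hXinv : ∀ x ∈ X, (fun i : ℤ => x (i + 1)) ∈ X)
    (μ : Measure (ℤ → A)) [IsProbabilityMeasure μ]
    (hshift : MeasurePreserving (fun (x : ℤ → A) (i : ℤ) => x (i + 1)) μ μ)
    (hsupp : ∀ (n : ℕ) (w : Fin n → A), ¬ Appears X n w → μ (Cyl n w) = 0)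
    (htopval hμval : ℝ)
    (htop : Filter.Tendsto
      (fun n : ℕ => Real.log (Nat.card {w : Fin n → A // Appears X n w}) / n)
      Filter.atTop (nhds htopval))
    (hent : Filter.Tendsto
      (fun n : ℕ => -(1 / (n : ℝ)) *
        ∑' w : {w : Fin n → A // Appears X n w},
          (μ (Cyl n w.val)).toReal * Real.log ((μ (Cyl n w.val)).toReal))
      Filter.atTop (nhds hμval))
    (hvar : hμval ≤ htopval)
    (hbound : ∃ c₁ c₂ : ℝ, 0 < c₁ ∧ 0 < c₂ ∧
      ∃ᶠ n : ℕ in Filter.atTop, ∀ w : Fin n → A, Appears X n w →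
        ENNReal.ofReal (c₁ / (Nat.card {w' : Fin n → A // Appears X n w'})) ≤ μ (Cyl n w) ∧
        μ (Cyl n w) ≤ ENNReal.ofReal (c₂ / (Nat.card {w' : Fin n → A // Appears X n w'}))) :
    hμval = htopval :=
  stmt17_general X μ hsupp htopval hμval htop hent hvar hbound
end
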